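/- With notation as above, if a geodesic k in the Cayley tree Γ_F is asymptotic to a minimal geodesic lamination λ in tight position with respect to Δ (i.e., k shares an endpoint at infinity with a lift of a leaf of λ), then Wh(k, Δ) ⊇ Wh(λ, Δ); in particular Wh(k, Δ) is connected and has no cut vertex. -/

import Mathlib

/-- A letter of the free group on `Fin n`: a generator (dual to a disc of the cut
system `Δ`) together with a sign. -/
abbrev Letter (n : ℕ) := Fin n × Bool

/-- The inverse letter. -/
def Letter.inverse {n : ℕ} (a : Letter n) : Letter n := (a.1, !a.2)

/-- A bi-infinite path in the Cayley tree / universal cover, recorded by the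
bi-infinite sequence of (signed) discs of the cut system that it crosses. -/
abbrev LineWord (n : ℕ) := ℤ → Letter n

/-- The crossing sequence has no backtracking (it is a geodesic in the tree); for the
lift of a leaf of a lamination this is exactly the tight position (no waves) condition. -/
def ReducedLine {n : ℕ} (c : LineWord n) : Prop :=
  ∀ k : ℤ, c (k + 1) ≠ Letter.inverse (c k)

/-- The transition `a` followed by `b` occurs along the line `c`. -/
def OccursIn {n : ℕ} (c : LineWord n) (a b : Letter n) : Prop :=
  ∃ k : ℤ, c k = a ∧ c (k + 1) = b

/-- The Whitehead graph `Wh(c, Δ)` of a line: vertices are the (signed) discs of `Δ`,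
with an edge between `x` and `y` for each pair of successive discs crossed by `c`. -/
def whLine {n : ℕ} (c : LineWord n) : SimpleGraph (Letter n) where
  Adj x y := x ≠ y ∧
    (OccursIn c x (Letter.inverse y) ∨ OccursIn c y (Letter.inverse x))
  symm := by
    constructor
    intro x y h
    exact ⟨h.1.symm, h.2.symm⟩
  loopless := by
    constructor
    intro x h
    exact h.1 rfl

/-- The Whitehead graph `Wh(λ, Δ)` of a lamination, given by the crossing sequences of
the lifts of its leaves: an edge whenever some leaf realises the transition. -/
def whLam {n : ℕ} (Λ : Set (LineWord n)) : SimpleGraph (Letter n) where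
  Adj x y := x ≠ y ∧ ∃ c ∈ Λ,
    (OccursIn c x (Letter.inverse y) ∨ OccursIn c y (Letter.inverse x))
  symm := by
    constructor
    intro x y h
    obtain ⟨hxy, c, hc, hor⟩ := h
    exact ⟨hxy.symm, c, hc, hor.symm⟩
  loopless := by
    constructor
    intro x h
    exact h.1 rfl

/-- Minimality of the lamination: every leaf is dense in the lamination, so every
transition realised by some leaf recurs along every other leaf beyond any point. -/
def MinimalLam {n : ℕ} (Λ : Set (LineWord n)) : Prop :=
  ∀ c ∈ Λ, ∀ a b : Letter n, OccursIn c a b →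
    ∀ c' ∈ Λ, ∀ j : ℤ, ∃ k : ℤ, j ≤ k ∧ c' k = a ∧ c' (k + 1) = b

/-- The lines `k` and `c` share their positive endpoints at infinity in the tree:
their positive tails eventually agree. -/
def SharesPosTail {n : ℕ} (k c : LineWord n) : Prop :=
  ∃ i j : ℤ, ∀ m : ℕ, k (i + m) = c (j + m)

/-- The lines `k` and `c` share their negative endpoints at infinity in the tree:
their negative tails eventually agree. -/
def SharesNegTail {n : ℕ} (k c : LineWord n) : Prop :=
  ∃ i j : ℤ, ∀ m : ℕ, k (i - m) = c (j - m)

/-- A graph has a cut vertex if removing some vertex disconnects it. -/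
def HasCutVertex {V : Type*} (G : SimpleGraph V) : Prop :=
  ∃ v : V, ¬ (G.induce {u | u ≠ v}).Connected

/-- The reversal of a line (the same leaf with the opposite orientation). -/
def LineWord.reverse {n : ℕ} (c : LineWord n) : LineWord n :=
  fun k => Letter.inverse (c (-k - 1))

lemma Letter.inverse_inverse {n : ℕ} (a : Letter n) : a.inverse.inverse = a := by
  simp [Letter.inverse]

lemma occursIn_reverse {n : ℕ} (c : LineWord n) (a b : Letter n) :
    OccursIn (LineWord.reverse c) a b ↔ OccursIn c b.inverse a.inverse := by
  constructor
  · rintro ⟨m, h1, h2⟩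
    refine ⟨-m - 2, ?_, ?_⟩
    · rw [← h2]; simp [LineWord.reverse, Letter.inverse_inverse]; ring_nf
    · rw [← h1]; simp [LineWord.reverse, Letter.inverse_inverse]; ring_nf
  · rintro ⟨m, h1, h2⟩
    refine ⟨-m - 2, ?_, ?_⟩
    · show (c (-(-m - 2) - 1)).inverse = a
      rw [show -(-m - 2) - 1 = m + 1 by ring, h2, Letter.inverse_inverse]
    · show (c (-(-m - 2 + 1) - 1)).inverse = b
      rw [show -(-m - 2 + 1) - 1 = m by ring, h1, Letter.inverse_inverse]

lemma whLine_reverse_le {n : ℕ} (c : LineWord n) :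
    whLine (LineWord.reverse c) ≤ whLine c := by
  rintro x y ⟨hxy, hor⟩
  refine ⟨hxy, ?_⟩
  rcases hor with h | h
  · right; rw [occursIn_reverse, Letter.inverse_inverse] at h; exact h
  · left; rw [occursIn_reverse, Letter.inverse_inverse] at h; exact h

lemma main_pos {n : ℕ} (Λ : Set (LineWord n)) (hmin : MinimalLam Λ)
    (c : LineWord n) (hc : c ∈ Λ) (k : LineWord n) (h : SharesPosTail k c) :
    whLam Λ ≤ whLine k := by
  obtain ⟨i, j, htail⟩ := h
  have key : ∀ a b : Letter n, (∃ c0 ∈ Λ, OccursIn c0 a b) → OccursIn k a b := by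
    rintro a b ⟨c0, hc0, hocc⟩
    obtain ⟨K, hK, ha, hb⟩ := hmin c0 hc0 a b hocc c hc j
    set t : ℕ := (K - j).toNat with ht
    have htz : (t : ℤ) = K - j := Int.toNat_of_nonneg (by omega)
    refine ⟨i + t, ?_, ?_⟩
    · rw [htail t, htz]; convert ha using 2; omega
    · have := htail (t + 1)
      push_cast at this
      rw [show i + (t : ℤ) + 1 = i + ((t : ℤ) + 1) by ring, this, htz]
      convert hb using 2; omega
  rintro x y ⟨hxy, c0, hc0, hor⟩
  refine ⟨hxy, ?_⟩
  rcases hor with h | h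
  · exact Or.inl (key _ _ ⟨c0, hc0, h⟩)
  · exact Or.inr (key _ _ ⟨c0, hc0, h⟩)

/-- If a geodesic `k` in the Cayley tree is asymptotic to a minimal geodesic lamination
`λ` in tight position with respect to `Δ` (it shares an endpoint at infinity with a
lift of a leaf), then `Wh(k, Δ) ⊇ Wh(λ, Δ)`; in particular `Wh(k, Δ)` is connected and
has no cut vertex. -/
theorem whitehead_graph_of_asymptotic_geodesic
    {n : ℕ} (Λ : Set (LineWord n)) (hne : Λ.Nonempty)
    (htight : ∀ c ∈ Λ, ReducedLine c) (hmin : MinimalLam Λ)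
    (hrev : ∀ c ∈ Λ, LineWord.reverse c ∈ Λ)
    (hconn : (whLam Λ).Connected) (hcut : ¬ HasCutVertex (whLam Λ))
    (k : LineWord n) (hk : ReducedLine k)
    (hasymp : ∃ c ∈ Λ, SharesPosTail k c ∨ SharesNegTail k c) :
    whLam Λ ≤ whLine k ∧ (whLine k).Connected ∧ ¬ HasCutVertex (whLine k) := by
  obtain ⟨c, hc, hpos | hneg⟩ := hasymp
  ·
    have hle := main_pos Λ hmin c hc k hpos
    refine ⟨hle, hconn.mono hle, ?_⟩
    rintro ⟨v, hv⟩
    simp only [HasCutVertex, not_exists, not_not] at hcut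
    exact hv ((hcut v).mono (fun u w h => hle h))
  ·
    obtain ⟨i, j, ht⟩ := hneg
    have hshare : SharesPosTail (LineWord.reverse k) (LineWord.reverse c) := by
      refine ⟨-i - 1, -j - 1, fun m => ?_⟩
      simp only [LineWord.reverse]
      have h1 : -(-i - 1 + (m : ℤ)) - 1 = i - m := by ring
      have h2 : -(-j - 1 + (m : ℤ)) - 1 = j - m := by ring
      rw [h1, h2, ht m]
    have hle' := main_pos Λ hmin (LineWord.reverse c) (hrev c hc)
      (LineWord.reverse k) hshare
    have hle := le_trans hle' (whLine_reverse_le k)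
    refine ⟨hle, hconn.mono hle, ?_⟩
    rintro ⟨v, hv⟩
    simp only [HasCutVertex, not_exists, not_not] at hcut
    exact hv ((hcut v).mono (fun u w h => hle h))
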